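/- Let A be a finite brace with abelian multiplicative group generated as a brace by one element x. Then for all k ≥ 1 and a ∈ A: x^{*k} * a = 0 if and only if a ∈ Soc_k(A). Consequently, |Soc_k(A)| · |A^{k+1}| = |A| for all k ≥ 0. -/

import Mathlib

/-- A skew (left) brace structure on an additive group `(A,+)`: a second group
operation `mul` (with inverse `inv`) sharing the identity `0`, satisfying
`a ∘ (b + c) = a ∘ b - a + a ∘ c`. -/
structure SkewBrace (A : Type*) [AddGroup A] where
  mul : A → A → A
  inv : A → A
  mul_assoc : ∀ a b c, mul (mul a b) c = mul a (mul b c)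
  zero_mul : ∀ a, mul 0 a = a
  mul_zero : ∀ a, mul a 0 = a
  inv_mul : ∀ a, mul (inv a) a = 0
  left_compat : ∀ a b c, mul a (b + c) = mul a b + -a + mul a c

/-- The star operation `a * b = -a + a∘b - b` of a skew brace. -/
def star {A : Type*} [AddGroup A] (S : SkewBrace A) (a b : A) : A :=
  -a + S.mul a b - b

/-- The left series of a skew brace: `lpow S 0 = A^1 = A` and
`lpow S n = A^{n+1} = A * A^n`. -/
def lpow {A : Type*} [AddGroup A] (S : SkewBrace A) : ℕ → AddSubgroup A
  | 0 => ⊤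
  | n + 1 => AddSubgroup.closure {z | ∃ a : A, ∃ b ∈ lpow S n, z = star S a b}

/-- `spow S x n` is the `(n+1)`-st `*`-power `x^{*(n+1)}` of `x`. -/
def spow {A : Type*} [AddGroup A] (S : SkewBrace A) (x : A) : ℕ → A
  | 0 => x
  | n + 1 => star S x (spow S x n)

/-- The socle series of a skew brace, described by coset conditions. -/
def socSet {A : Type*} [AddGroup A] (S : SkewBrace A) : ℕ → Set A
  | 0 => {0}
  | n + 1 => {z | ∀ a : A,
      S.mul z a - (z + a) ∈ socSet S n ∧ (z + a) - (a + z) ∈ socSet S n}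


section Basic
variable {A : Type*} [AddCommGroup A] (S : SkewBrace A)

lemma star_def (a b : A) : star S a b = -a + S.mul a b - b := rfl

lemma star_add_right (a b c : A) : star S a (b + c) = star S a b + star S a c := by
  simp only [star_def, S.left_compat]; abel

lemma star_zero_right (a : A) : star S a 0 = 0 := by
  simp [star_def, S.mul_zero]

/-- `star S a ·` as an additive hom. -/
def starHom (a : A) : A →+ A :=
  AddMonoidHom.mk' (star S a) (star_add_right S a)

@[simp] lemma starHom_apply (a b : A) : starHom S a b = star S a b := rfl

lemma mul_eq_star (a b : A) : S.mul a b = a + b + star S a b := by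
  rw [star_def]; abel

lemma star_comm (hcomm : ∀ a b : A, S.mul a b = S.mul b a) (a b : A) :
    star S a b = star S b a := by
  simp only [star_def, hcomm a b]; abel

lemma star_add_left (hcomm : ∀ a b : A, S.mul a b = S.mul b a) (a b c : A) :
    star S (a + b) c = star S a c + star S b c := by
  rw [star_comm S hcomm, star_add_right, star_comm S hcomm c a, star_comm S hcomm c b]

lemma star_zero_left (a : A) : star S 0 a = 0 := by
  simp [star_def, S.zero_mul]

lemma star_assoc (hcomm : ∀ a b : A, S.mul a b = S.mul b a) (a b c : A) :
    star S (star S a b) c = star S a (star S b c) := by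
  have h := S.mul_assoc a b c
  rw [mul_eq_star S a b, mul_eq_star S b c] at h
  rw [mul_eq_star S (a + b + star S a b) c, mul_eq_star S a (b + c + star S b c)] at h
  rw [star_add_left S hcomm, star_add_left S hcomm, star_add_right, star_add_right] at h
  linear_combination (norm := abel) h
end Basic

section Pow
variable {A : Type*} [AddCommGroup A] (S : SkewBrace A)
variable (hcomm : ∀ a b : A, S.mul a b = S.mul b a)
include hcomm

omit hcomm in
lemma spow_succ (x : A) (n : ℕ) : spow S x (n + 1) = star S x (spow S x n) := rfl

lemma spow_mul (x : A) (m n : ℕ) :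
    star S (spow S x m) (spow S x n) = spow S x (m + n + 1) := by
  induction m with
  | zero => rw [Nat.zero_add]; rfl
  | succ m ih =>
      rw [spow_succ S, star_assoc S hcomm, ih,
        show m + 1 + n + 1 = (m + n + 1) + 1 from by omega]
      rfl

omit hcomm in
lemma sb_inv_unique (a b : A) (h : S.mul a b = 0) : S.inv a = b := by
  have : S.mul (S.inv a) (S.mul a b) = S.inv a := by rw [h, S.mul_zero]
  rw [← S.mul_assoc, S.inv_mul, S.zero_mul] at this
  exact this.symm

omit hcomm in
lemma star_neg_right (a b : A) : star S a (-b) = -star S a b :=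
  (starHom S a).map_neg b

lemma star_neg_left (a b : A) : star S (-a) b = -star S a b := by
  have h0 : star S (a + -a) b = star S a b + star S (-a) b := star_add_left S hcomm a (-a) b
  rw [add_neg_cancel, star_zero_left] at h0
  exact eq_neg_of_add_eq_zero_left ((add_comm _ _).trans h0.symm)

/-- Every element is `*`-nilpotent. -/
lemma spow_eventually_zero [Finite A] (a : A) : ∃ n, spow S a n = 0 := by
  obtain ⟨i, j, hne, hij⟩ := Finite.exists_ne_map_eq_of_infinite (fun n : ℕ => spow S a n)
  wlog hlt : i < j generalizing i j
  · exact this j i hne.symm hij.symm ((Ne.lt_or_gt hne).resolve_left hlt)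
  set y := spow S a i with hy
  set e := spow S a (j - i - 1) with he
  have hye : star S e y = y := by
    rw [he, hy, spow_mul S hcomm]
    rw [show j - i - 1 + i + 1 = j by omega, ← hij]
  set g := S.inv (-e) with hg
  have hmul : S.mul (-e) g = 0 := by rw [hcomm]; exact S.inv_mul (-e)
  have hgeq : star S e g = g - e := by
    have := mul_eq_star S (-e) g
    rw [hmul, star_neg_left S hcomm] at this
    linear_combination (norm := abel) this
  have hef : star S e (-g) = e + -g := by
    rw [star_neg_right, hgeq]; abel
  have key : star S y (star S e (-g)) = star S y (-g) := by
    rw [← star_assoc S hcomm, star_comm S hcomm y e, hye]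
  rw [hef, star_add_right] at key
  have hy0 : y = 0 := by
    rw [star_comm S hcomm y e, hye] at key
    linear_combination (norm := abel) key
  exact ⟨i, hy0⟩
end Pow

section Span
variable {A : Type*} [AddCommGroup A] (S : SkewBrace A)

/-- `star S · b` as an additive hom (needs commutativity). -/
def starHom' (hcomm : ∀ a b : A, S.mul a b = S.mul b a) (b : A) : A →+ A :=
  AddMonoidHom.mk' (fun a => star S a b) (fun a a' => star_add_left S hcomm a a' b)

variable (hcomm : ∀ a b : A, S.mul a b = S.mul b a) (x : A)
include hcomm

/-- The additive span of the star powers of `x`. -/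
def spanT : AddSubgroup A := AddSubgroup.closure (Set.range (spow S x))

omit hcomm in
lemma spow_mem_spanT (n : ℕ) : spow S x n ∈ spanT S x := by
  exact AddSubgroup.subset_closure ⟨n, rfl⟩

lemma spow_star_mem_spanT (m : ℕ) {b : A} (hb : b ∈ spanT S x) :
    star S (spow S x m) b ∈ spanT S x := by
  have hle : spanT S x ≤ (spanT S x).comap (starHom S (spow S x m)) := by
    rw [spanT, AddSubgroup.closure_le]
    rintro z ⟨n, rfl⟩
    simpa [spow_mul S hcomm, spanT] using spow_mem_spanT S x (m + n + 1)
  exact hle hb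

lemma star_mem_spanT {a b : A} (ha : a ∈ spanT S x) (hb : b ∈ spanT S x) :
    star S a b ∈ spanT S x := by
  have hle : spanT S x ≤ (spanT S x).comap (starHom' S hcomm b) := by
    rw [spanT, AddSubgroup.closure_le]
    rintro z ⟨n, rfl⟩
    exact spow_star_mem_spanT S hcomm x n hb
  exact hle ha

lemma spow_gen_mem_spanT {a : A} (ha : a ∈ spanT S x) (n : ℕ) :
    spow S a n ∈ spanT S x := by
  induction n with
  | zero => exact ha
  | succ n ih => exact star_mem_spanT S hcomm x ha ih

/-- partial quasi-inverse sum `q n a = ∑_{i=0}^{n} (-1)^{i+1} a^{*(i+1)}`. -/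
def qsum (a : A) (n : ℕ) : A := ∑ i ∈ Finset.range (n + 1), ((-1 : ℤ) ^ (i + 1)) • spow S a i

omit hcomm in
lemma star_zsmul_right (a : A) (n : ℤ) (b : A) :
    star S a (n • b) = n • star S a b :=
  (starHom S a).map_zsmul n b

omit hcomm in
lemma qsum_spec (a : A) (n : ℕ) :
    a + qsum S a n + star S a (qsum S a n) = ((-1 : ℤ) ^ (n + 1)) • spow S a (n + 1) := by
  induction n with
  | zero =>
      have h0 : qsum S a 0 = -a := by simp [qsum, spow]
      rw [h0, star_neg_right]
      have h1 : spow S a (0 + 1) = star S a a := rfl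
      rw [h1]
      simp
  | succ n ih =>
      have hq : qsum S a (n + 1) = qsum S a n + ((-1 : ℤ) ^ (n + 2)) • spow S a (n + 1) := by
        rw [qsum, Finset.sum_range_succ]; rfl
      rw [hq, star_add_right, star_zsmul_right]
      have hstep : star S a (spow S a (n + 1)) = spow S a (n + 2) := rfl
      rw [hstep]
      have hcancel : ((-1 : ℤ) ^ (n + 1)) • spow S a (n + 1)
          + ((-1 : ℤ) ^ (n + 2)) • spow S a (n + 1) = 0 := by
        rw [← add_smul]
        have he : (-1 : ℤ) ^ (n + 1) + (-1 : ℤ) ^ (n + 2) = 0 := by ring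
        rw [he]
        simp
      calc a + (qsum S a n + ((-1 : ℤ) ^ (n + 2)) • spow S a (n + 1))
          + (star S a (qsum S a n) + ((-1 : ℤ) ^ (n + 2)) • spow S a (n + 2))
          = (a + qsum S a n + star S a (qsum S a n))
            + ((-1 : ℤ) ^ (n + 2)) • spow S a (n + 1)
            + ((-1 : ℤ) ^ (n + 2)) • spow S a (n + 2) := by abel
        _ = (((-1 : ℤ) ^ (n + 1)) • spow S a (n + 1)
            + ((-1 : ℤ) ^ (n + 2)) • spow S a (n + 1))
            + ((-1 : ℤ) ^ (n + 2)) • spow S a (n + 2) := by rw [ih]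
        _ = ((-1 : ℤ) ^ (n + 2)) • spow S a (n + 2) := by rw [hcancel, zero_add]
            
        _ = _ := rfl

lemma inv_mem_spanT [Finite A] {a : A} (ha : a ∈ spanT S x) : S.inv a ∈ spanT S x := by
  obtain ⟨n, hn⟩ := spow_eventually_zero S hcomm a
  have hn1 : spow S a (n + 1) = 0 := by rw [spow_succ, hn, star_zero_right]
  have hq := qsum_spec S a n
  rw [hn1, smul_zero] at hq
  have : S.mul a (qsum S a n) = 0 := by rw [mul_eq_star]; exact hq
  rw [sb_inv_unique S a _ this]
  have : qsum S a n ∈ spanT S x := by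
    apply AddSubgroup.sum_mem
    intro i _
    exact AddSubgroup.zsmul_mem _ (spow_gen_mem_spanT S hcomm x ha i) _
  exact this

end Span

section Main
variable {A : Type*} [AddCommGroup A] [Finite A] (S : SkewBrace A)
variable (hcomm : ∀ a b : A, S.mul a b = S.mul b a) (x : A)
variable (hgen : ∀ T : Set A, (0 : A) ∈ T →
      (∀ a ∈ T, ∀ b ∈ T, a + b ∈ T) → (∀ a ∈ T, -a ∈ T) →
      (∀ a ∈ T, ∀ b ∈ T, S.mul a b ∈ T) → (∀ a ∈ T, S.inv a ∈ T) →
      x ∈ T → T = Set.univ)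
include hcomm hgen

lemma span_eq_top : spanT S x = ⊤ := by
  have h := hgen (spanT S x : Set A) (AddSubgroup.zero_mem _)
    (fun a ha b hb => AddSubgroup.add_mem _ ha hb)
    (fun a ha => AddSubgroup.neg_mem _ ha)
    (fun a ha b hb => by
      rw [mul_eq_star]
      exact AddSubgroup.add_mem _ (AddSubgroup.add_mem _ ha hb)
        (star_mem_spanT S hcomm x ha hb))
    (fun a ha => inv_mem_spanT S hcomm x ha)
    (spow_mem_spanT S x 0)
  exact (AddSubgroup.coe_eq_univ).mp h

lemma mem_spanT_all (a : A) : a ∈ spanT S x := by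
  rw [span_eq_top S hcomm x hgen]; trivial

/-- If `x * u = 0` then `u` annihilates everything. -/
lemma star_ann {u : A} (h : star S x u = 0) (b : A) : star S u b = 0 := by
  have hle : spanT S x ≤ (starHom S u).ker := by
    rw [spanT, AddSubgroup.closure_le]
    rintro z ⟨m, rfl⟩
    induction m with
    | zero =>
        show star S u x = 0
        rw [star_comm S hcomm, h]
    | succ m ih =>
        show star S u (spow S x (m + 1)) = 0
        rw [spow_succ, ← star_assoc S hcomm]
        have hux : star S u x = 0 := by rw [star_comm S hcomm, h]
        rw [hux, star_zero_left]
  exact hle (mem_spanT_all S hcomm x hgen b)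

omit hcomm hgen in
lemma sub_eq_star (z a : A) : S.mul z a - (z + a) = star S z a := by
  rw [star_def]; abel

omit hcomm hgen in
lemma zero_mem_socSet : ∀ n, (0 : A) ∈ socSet S n := by
  intro n
  induction n with
  | zero => rfl
  | succ n ih =>
      intro a
      refine ⟨?_, ?_⟩
      · rw [sub_eq_star, star_zero_left]; exact ih
      · rw [show (0 : A) + a - (a + 0) = 0 by abel]; exact ih

omit hcomm hgen in
lemma mem_socSet_succ (z : A) (n : ℕ) :
    z ∈ socSet S (n + 1) ↔ ∀ a : A, star S z a ∈ socSet S n := by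
  constructor
  · intro h a
    have := (h a).1
    rwa [sub_eq_star] at this
  · intro h a
    refine ⟨by rw [sub_eq_star]; exact h a, ?_⟩
    rw [show z + a - (a + z) = 0 by abel]
    exact zero_mem_socSet S n

lemma part1 : ∀ k : ℕ, ∀ a : A, star S (spow S x k) a = 0 ↔ a ∈ socSet S (k + 1) := by
  intro k
  induction k with
  | zero =>
      intro a
      rw [mem_socSet_succ]
      constructor
      · intro h b
        exact star_ann S hcomm x hgen h b
      · intro h
        rw [star_comm S hcomm]
        exact h x
  | succ k ih =>
      intro a
      constructor
      · intro h
        rw [mem_socSet_succ]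
        intro b
        rw [← ih]
        have hxu : star S x (star S (spow S x k) a) = 0 := by
          rw [← star_assoc S hcomm, ← spow_succ]
          exact h
        rw [← star_assoc S hcomm]
        exact star_ann S hcomm x hgen hxu b
      · intro h
        have h1 : star S a x ∈ socSet S (k + 1) := (mem_socSet_succ S a (k + 1)).mp h x
        have h2 : star S (spow S x k) (star S a x) = 0 := (ih _).mpr h1
        have h3 : star S (spow S x (k + 1)) a
            = star S (spow S x k) (star S a x) := by
          rw [star_comm S hcomm a x, ← star_assoc S hcomm, star_comm S hcomm _ x, ← spow_succ]
        rw [h3, h2]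
end Main

section Part2
variable {A : Type*} [AddCommGroup A] [Finite A] (S : SkewBrace A)
variable (hcomm : ∀ a b : A, S.mul a b = S.mul b a) (x : A)
variable (hgen : ∀ T : Set A, (0 : A) ∈ T →
      (∀ a ∈ T, ∀ b ∈ T, a + b ∈ T) → (∀ a ∈ T, -a ∈ T) →
      (∀ a ∈ T, ∀ b ∈ T, S.mul a b ∈ T) → (∀ a ∈ T, S.inv a ∈ T) →
      x ∈ T → T = Set.univ)
include hcomm hgen

omit hgen [Finite A] in
lemma star_spow_base (m : ℕ) (b : A) : ∃ c, star S (spow S x m) b = star S x c := by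
  cases m with
  | zero => exact ⟨b, rfl⟩
  | succ m => exact ⟨star S (spow S x m) b, by rw [spow_succ, star_assoc S hcomm]⟩

omit hgen [Finite A] in
lemma star_spow_shift (m k : ℕ) (c : A) :
    ∃ d, star S (spow S x m) (star S (spow S x k) c)
      = star S (spow S x (k + 1)) d := by
  have h1 : star S (spow S x m) (star S (spow S x k) c)
      = star S (spow S x (m + k + 1)) c := by
    rw [← star_assoc S hcomm, spow_mul S hcomm]
  cases m with
  | zero => exact ⟨c, by rw [h1, Nat.zero_add]⟩
  | succ m =>
      refine ⟨star S (spow S x m) c, ?_⟩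
      rw [h1, show m + 1 + k + 1 = k + 1 + m + 1 by omega, ← spow_mul S hcomm,
        star_assoc S hcomm]

lemma star_mem_range_base (b a : A) : star S a b ∈ (starHom S x).range := by
  have hle : spanT S x ≤ AddSubgroup.comap (starHom' S hcomm b) (starHom S x).range := by
    rw [spanT, AddSubgroup.closure_le]
    rintro z ⟨m, rfl⟩
    obtain ⟨c, hc⟩ := star_spow_base S hcomm x m b
    exact ⟨c, hc.symm⟩
  exact hle (mem_spanT_all S hcomm x hgen a)

lemma star_mem_range_shift (k : ℕ) (c a : A) :
    star S a (star S (spow S x k) c) ∈ (starHom S (spow S x (k + 1))).range := by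
  have hle : spanT S x ≤ AddSubgroup.comap (starHom' S hcomm (star S (spow S x k) c))
      (starHom S (spow S x (k + 1))).range := by
    rw [spanT, AddSubgroup.closure_le]
    rintro z ⟨m, rfl⟩
    obtain ⟨d, hd⟩ := star_spow_shift S hcomm x m k c
    exact ⟨d, hd.symm⟩
  exact hle (mem_spanT_all S hcomm x hgen a)

lemma lpow_eq_range : ∀ k : ℕ, lpow S (k + 1) = (starHom S (spow S x k)).range := by
  intro k
  induction k with
  | zero =>
      apply le_antisymm
      · rw [show lpow S (0 + 1)
            = AddSubgroup.closure {z | ∃ a : A, ∃ b ∈ lpow S 0, z = star S a b} from rfl,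
          AddSubgroup.closure_le]
        rintro z ⟨a, b, hb, rfl⟩
        exact star_mem_range_base S hcomm x hgen b a
      · rintro z ⟨c, rfl⟩
        exact AddSubgroup.subset_closure ⟨x, c, trivial, rfl⟩
  | succ k ih =>
      apply le_antisymm
      · rw [show lpow S (k + 1 + 1)
            = AddSubgroup.closure {z | ∃ a : A, ∃ b ∈ lpow S (k + 1), z = star S a b} from rfl,
          AddSubgroup.closure_le]
        rintro z ⟨a, b, hb, rfl⟩
        rw [ih] at hb
        obtain ⟨c, rfl⟩ := hb
        exact star_mem_range_shift S hcomm x hgen k c a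
      · rintro z ⟨c, rfl⟩
        apply AddSubgroup.subset_closure
        refine ⟨x, star S (spow S x k) c, ?_, ?_⟩
        · rw [ih]; exact ⟨c, rfl⟩
        · show starHom S (spow S x (k + 1)) c = star S x (star S (spow S x k) c)
          rw [starHom_apply, spow_succ, star_assoc S hcomm]

lemma part2 : ∀ k : ℕ, Nat.card (socSet S k) * Nat.card (lpow S k) = Nat.card A := by
  intro k
  cases k with
  | zero =>
      have h1 : Nat.card (socSet S 0) = 1 := by
        show Nat.card ({0} : Set A) = 1
        simp
      have h2 : Nat.card (lpow S 0) = Nat.card A := by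
        show Nat.card (⊤ : AddSubgroup A) = Nat.card A
        exact Nat.card_congr AddSubgroup.topEquiv.toEquiv
      rw [h1, h2, one_mul]
  | succ k =>
      set φ := starHom S (spow S x k) with hφ
      have hker : (socSet S (k + 1) : Set A) = (φ.ker : Set A) := by
        ext a
        rw [SetLike.mem_coe, AddMonoidHom.mem_ker]
        exact (part1 S hcomm x hgen k a).symm
      have h1 : Nat.card (socSet S (k + 1)) = Nat.card φ.ker := by
        rw [hker]; rfl
      have h2 : Nat.card (lpow S (k + 1)) = Nat.card φ.range := by
        rw [lpow_eq_range S hcomm x hgen k]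
      have h3 : Nat.card (A ⧸ φ.ker) = Nat.card φ.range :=
        Nat.card_congr (QuotientAddGroup.quotientKerEquivRange φ).toEquiv
      have h4 := AddSubgroup.card_eq_card_quotient_mul_card_addSubgroup φ.ker
      rw [h1, h2, ← h3, mul_comm, ← h4]
end Part2

/-- For a finite brace with abelian multiplicative group generated by one
element `x`: `x^{*k} * a = 0 ↔ a ∈ Soc_k(A)` (for `k ≥ 1`), and
`|Soc_k(A)| · |A^{k+1}| = |A|` for all `k ≥ 0` (here `A^{k+1} = lpow S k`). -/
theorem stmt_12 {A : Type*} [AddCommGroup A] [Finite A] (S : SkewBrace A)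
    (hcomm : ∀ a b : A, S.mul a b = S.mul b a) (x : A)
    (hgen : ∀ T : Set A, (0 : A) ∈ T →
      (∀ a ∈ T, ∀ b ∈ T, a + b ∈ T) → (∀ a ∈ T, -a ∈ T) →
      (∀ a ∈ T, ∀ b ∈ T, S.mul a b ∈ T) → (∀ a ∈ T, S.inv a ∈ T) →
      x ∈ T → T = Set.univ) :
    (∀ k : ℕ, ∀ a : A, star S (spow S x k) a = 0 ↔ a ∈ socSet S (k + 1)) ∧
    (∀ k : ℕ, Nat.card (socSet S k) * Nat.card (lpow S k) = Nat.card A) := by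
  exact ⟨part1 S hcomm x hgen, part2 S hcomm x hgen⟩
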